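/- (Marković's theorem) Let u : 𝕌 → (0, +∞) be a positive harmonic function on the open unit disc. Then for all z₁, z₂ ∈ 𝕌, |log(u(z₁)/u(z₂))| ≤ log( (1+ρ)/(1−ρ) ), where ρ = |(z₁ − z₂)/(1 − conj(z₁)·z₂)|. -/

import Mathlib

/-!
Write `u = Re F` with `F` holomorphic on the disc. The Cayley map
`w ↦ (w - F z₁) / (w + conj (F z₁))` sends the right half-plane into the disc, so composing it
with `F` gives a holomorphic self-map of the disc vanishing at `z₁`, which Schwarz's lemma (moved
to base point `z₁` by a Möbius map) bounds by the pseudo-hyperbolic distance `ρ`. Taking real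
parts, this reads `|u z₂ - u z₁| ≤ ρ (u z₁ + u z₂)`, which is the claimed bound after taking
logarithms.
-/

open Complex ComplexConjugate Metric Set Filter InnerProductSpace Laplacian

theorem laplacian_eq_fderiv_partial_add {F : Type*} [NormedAddCommGroup F] [NormedSpace ℝ F]
    {f : ℂ → F} {z : ℂ} (hf : ContDiffAt ℝ 2 f z) :
    Δ f z = fderiv ℝ (fun w => fderiv ℝ f w 1) z 1 + fderiv ℝ (fun w => fderiv ℝ f w I) z I := by
  have hdf : DifferentiableAt ℝ (fderiv ℝ f) z :=
    (hf.fderiv_right (m := 1) (by norm_num)).differentiableAt (by norm_num)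
  simp [laplacian_eq_iteratedFDeriv_complexPlane, iteratedFDeriv_two_apply,
    fderiv_clm_apply hdf (differentiableAt_const _)]

theorem harmonicOnNhd_of_laplace_eq_zero {F : Type*} [NormedAddCommGroup F] [NormedSpace ℝ F]
    {f : ℂ → F} {s : Set ℂ} (hs : IsOpen s) (hf : ContDiffOn ℝ 2 f s)
    (hlap : ∀ z ∈ s, fderiv ℝ (fun w => fderiv ℝ f w 1) z 1 +
      fderiv ℝ (fun w => fderiv ℝ f w I) z I = 0) :
    HarmonicOnNhd f s := fun z hz =>
  ⟨hf.contDiffAt (hs.mem_nhds hz), eventually_of_mem (hs.mem_nhds hz) fun w hw => by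
    rw [laplacian_eq_fderiv_partial_add (hf.contDiffAt (hs.mem_nhds hw)), hlap w hw]; rfl⟩

noncomputable def mobius (a z : ℂ) : ℂ := (z - a) / (1 - conj a * z)

theorem normSq_one_sub_conj_mul_sub_normSq_sub (a z : ℂ) :
    normSq (1 - conj a * z) - normSq (z - a) = (1 - normSq a) * (1 - normSq z) := by
  simp only [normSq_apply, sub_re, sub_im, mul_re, mul_im, one_re, one_im, conj_re, conj_im]
  ring

theorem one_sub_conj_mul_ne_zero {a z : ℂ} (ha : ‖a‖ < 1) (hz : ‖z‖ < 1) :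
    1 - conj a * z ≠ 0 := by
  rw [sub_ne_zero]
  refine fun h => (lt_irrefl (1 : ℝ)) ?_
  calc (1 : ℝ) = ‖conj a * z‖ := by rw [← h, norm_one]
    _ = ‖a‖ * ‖z‖ := by rw [norm_mul, norm_conj]
    _ < 1 := mul_lt_one_of_nonneg_of_lt_one_left (norm_nonneg a) ha hz.le

theorem norm_mobius_lt_one {a z : ℂ} (ha : ‖a‖ < 1) (hz : ‖z‖ < 1) : ‖mobius a z‖ < 1 := by
  have hD := one_sub_conj_mul_ne_zero ha hz
  have hsq : ∀ {w : ℂ}, ‖w‖ < 1 → 0 < 1 - normSq w := fun hw => by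
    rw [← Complex.sq_norm, sub_pos]; exact pow_lt_one₀ (norm_nonneg _) hw two_ne_zero
  rw [mobius, norm_div, div_lt_one (norm_pos_iff.2 hD),
    ← sq_lt_sq₀ (norm_nonneg _) (norm_nonneg _), Complex.sq_norm, Complex.sq_norm, ← sub_pos,
    normSq_one_sub_conj_mul_sub_normSq_sub]
  exact mul_pos (hsq ha) (hsq hz)

theorem mapsTo_mobius {a : ℂ} (ha : ‖a‖ < 1) : MapsTo (mobius a) (ball 0 1) (ball 0 1) :=
  fun _ hz => mem_ball_zero_iff.2 (norm_mobius_lt_one ha (mem_ball_zero_iff.1 hz))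

theorem differentiableOn_mobius {a : ℂ} (ha : ‖a‖ < 1) :
    DifferentiableOn ℂ (mobius a) (ball 0 1) :=
  fun _ hz => ((differentiableAt_id.sub_const a).div ((differentiableAt_const _).sub
    (differentiableAt_id.const_mul _))
    (one_sub_conj_mul_ne_zero ha (mem_ball_zero_iff.1 hz))).differentiableWithinAt

theorem mobius_neg_mobius {a z : ℂ} (ha : ‖a‖ < 1) (hz : ‖z‖ < 1) :
    mobius (-a) (mobius a z) = z := by
  have hD := one_sub_conj_mul_ne_zero ha hz
  have ha' : 1 - conj a * a ≠ 0 := one_sub_conj_mul_ne_zero ha ha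
  have hm : mobius a z * (1 - conj a * z) = z - a := div_mul_cancel₀ _ hD
  have hnum : mobius a z - -a = z * (1 - conj a * a) / (1 - conj a * z) := by
    rw [eq_div_iff hD]; linear_combination hm
  have hden : 1 - conj (-a) * mobius a z = (1 - conj a * a) / (1 - conj a * z) := by
    rw [eq_div_iff hD, map_neg]; linear_combination conj a * hm
  rw [mobius, hnum, hden, div_div_div_cancel_right₀ hD, mul_div_cancel_right₀ _ ha']

theorem norm_le_norm_mobius_of_mapsTo_ball {f : ℂ → ℂ} (hd : DifferentiableOn ℂ f (ball 0 1))
    (hf : MapsTo f (ball 0 1) (ball 0 1)) {a z : ℂ} (ha : a ∈ ball 0 1) (hz : z ∈ ball 0 1)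
    (hfa : f a = 0) : ‖f z‖ ≤ ‖mobius a z‖ := by
  rw [mem_ball_zero_iff] at ha hz
  have ha' : ‖-a‖ < 1 := by rwa [norm_neg]
  have h := Complex.norm_le_norm_of_mapsTo_ball
    (hd.comp (differentiableOn_mobius ha') (mapsTo_mobius ha'))
    ((hf.comp (mapsTo_mobius ha')).mono_right ball_subset_closedBall) (by simp [mobius, hfa])
    (norm_mobius_lt_one ha hz)
  rwa [Function.comp_apply, mobius_neg_mobius ha hz] at h

theorem normSq_sub_eq_sq_add_sq {w v : ℂ} :
    normSq (w - v) = (w.re - v.re) ^ 2 + (w.im - v.im) ^ 2 := by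
  simp only [normSq_apply, sub_re, sub_im]; ring

theorem normSq_add_conj_eq_sq_add_sq {w v : ℂ} :
    normSq (w + conj v) = (w.re + v.re) ^ 2 + (w.im - v.im) ^ 2 := by
  simp only [normSq_apply, add_re, add_im, conj_re, conj_im]; ring

theorem add_conj_ne_zero_of_re_pos {w v : ℂ} (hw : 0 < w.re) (hv : 0 < v.re) : w + conj v ≠ 0 :=
  fun h => by
    have hre := congrArg re h
    rw [add_re, conj_re, zero_re] at hre
    linarith

theorem norm_sub_div_add_conj_lt_one {w v : ℂ} (hw : 0 < w.re) (hv : 0 < v.re) :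
    ‖(w - v) / (w + conj v)‖ < 1 := by
  rw [norm_div, div_lt_one (norm_pos_iff.2 (add_conj_ne_zero_of_re_pos hw hv)),
    ← sq_lt_sq₀ (norm_nonneg _) (norm_nonneg _), Complex.sq_norm, Complex.sq_norm,
    normSq_sub_eq_sq_add_sq, normSq_add_conj_eq_sq_add_sq]
  nlinarith [mul_pos hw hv]

theorem abs_re_sub_re_le {w v : ℂ} (hw : 0 < w.re) (hv : 0 < v.re) :
    |w.re - v.re| ≤ ‖(w - v) / (w + conj v)‖ * (w.re + v.re) := by
  have hD := norm_pos_iff.2 (add_conj_ne_zero_of_re_pos hw hv)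
  rw [norm_div, div_mul_eq_mul_div, le_div_iff₀ hD, ← abs_of_pos (add_pos hw hv), ← abs_norm,
    ← abs_norm (w - v), ← abs_mul, ← abs_mul, ← sq_le_sq, mul_pow, mul_pow, Complex.sq_norm,
    Complex.sq_norm, normSq_sub_eq_sq_add_sq, normSq_add_conj_eq_sq_add_sq]
  nlinarith [sq_nonneg (w.im - v.im), mul_pos hw hv]

theorem abs_log_div_le_of_abs_sub_le {a b ρ : ℝ} (ha : 0 < a) (hb : 0 < b) (hρ : ρ < 1)
    (h : |a - b| ≤ ρ * (a + b)) : |Real.log (a / b)| ≤ Real.log ((1 + ρ) / (1 - ρ)) := by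
  have bound : ∀ {x y : ℝ}, 0 < x → 0 < y → x - y ≤ ρ * (x + y) →
      Real.log (x / y) ≤ Real.log ((1 + ρ) / (1 - ρ)) := fun hx hy hxy =>
    Real.log_le_log (div_pos hx hy) (by rw [div_le_div_iff₀ hy (by linarith)]; linarith)
  rw [abs_le] at h ⊢
  refine ⟨neg_le.2 ?_, bound ha hb h.2⟩
  rw [← Real.log_inv, inv_div]
  exact bound hb ha (by linarith [h.1])

theorem abs_re_sub_re_le_of_re_pos {F : ℂ → ℂ} (hF : DifferentiableOn ℂ F (ball 0 1))
    (hpos : ∀ z ∈ ball 0 1, 0 < (F z).re) {a z : ℂ} (ha : a ∈ ball 0 1) (hz : z ∈ ball 0 1) :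
    |(F z).re - (F a).re| ≤ ‖mobius a z‖ * ((F z).re + (F a).re) := by
  have hFa := hpos a ha
  have hFz := hpos z hz
  set G : ℂ → ℂ := fun w => (F w - F a) / (F w + conj (F a))
  have hG : DifferentiableOn ℂ G (ball 0 1) :=
    (hF.sub_const _).div (hF.add_const _) fun w hw => add_conj_ne_zero_of_re_pos (hpos w hw) hFa
  have hGmaps : MapsTo G (ball 0 1) (ball 0 1) := fun w hw =>
    mem_ball_zero_iff.2 (norm_sub_div_add_conj_lt_one (hpos w hw) hFa)
  calc |(F z).re - (F a).re| ≤ ‖G z‖ * ((F z).re + (F a).re) := abs_re_sub_re_le hFz hFa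
    _ ≤ ‖mobius a z‖ * ((F z).re + (F a).re) := by
      gcongr
      exact norm_le_norm_mobius_of_mapsTo_ball hG hGmaps ha hz (by simp [G])

/-- Marković's theorem: a positive harmonic function on the unit disc
contracts the hyperbolic metrics. -/
theorem markovic_theorem (u : ℂ → ℝ)
(hreg : ContDiffOn ℝ 2 u (Metric.ball (0:ℂ) 1))
    (hlap : ∀ z ∈ Metric.ball (0:ℂ) 1,
      fderiv ℝ (fun w => fderiv ℝ u w 1) z 1 +
      fderiv ℝ (fun w => fderiv ℝ u w Complex.I) z Complex.I = 0)
    (hpos : ∀ z ∈ Metric.ball (0:ℂ) 1, 0 < u z)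
    (z₁ z₂ : ℂ) (hz₁ : z₁ ∈ Metric.ball (0:ℂ) 1) (hz₂ : z₂ ∈ Metric.ball (0:ℂ) 1) :
    |Real.log (u z₁ / u z₂)| ≤
      Real.log ((1 + ‖(z₁ - z₂) / (1 - (starRingEnd ℂ) z₁ * z₂)‖) /
        (1 - ‖(z₁ - z₂) / (1 - (starRingEnd ℂ) z₁ * z₂)‖)) := by
  obtain ⟨F, hF, hFu⟩ :=
    (harmonicOnNhd_of_laplace_eq_zero isOpen_ball hreg hlap).exists_analyticOnNhd_ball_re_eq
  have hre : ∀ z ∈ ball 0 1, (F z).re = u z := fun _ hz => hFu hz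
  have hρ : ‖(z₁ - z₂) / (1 - conj z₁ * z₂)‖ = ‖mobius z₁ z₂‖ := by
    rw [mobius, norm_div, norm_div, norm_sub_rev]
  have hharnack := abs_re_sub_re_le_of_re_pos hF.differentiableOn
    (fun z hz => hre z hz ▸ hpos z hz) hz₁ hz₂
  rw [hre z₁ hz₁, hre z₂ hz₂, abs_sub_comm, add_comm] at hharnack
  rw [hρ]
  exact abs_log_div_le_of_abs_sub_le (hpos z₁ hz₁) (hpos z₂ hz₂)
    (norm_mobius_lt_one (mem_ball_zero_iff.1 hz₁) (mem_ball_zero_iff.1 hz₂)) hharnack
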